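/- arXiv:0903.2038 — 3 statements merged into one kernel-verified Lean document; each statement's English description precedes it below -/
import Mathlib

section
/- Let (Ω, μ) be a measure space and let E and G be Banach spaces. For every bounded bilinear map φ: L¹(Ω) × E → G there exists a unique bounded linear operator T: L¹(Ω; E) → G such that T(f(·)η) = φ(f, η) for all f ∈ L¹(Ω) and η ∈ E, and this operator satisfies ‖T‖ = ‖φ‖. Moreover ‖f(·)η‖_{L¹(Ω;E)} = ‖f‖_{L¹} ‖η‖_E. (Equivalently: L¹(Ω; E), together with the bilinear map (f, η) ↦ f(·)η, is a projective tensor product of L¹(Ω) and E, so L¹(Ω) ⊗̂_π E ≅ L¹(Ω; E) isometrically.) -/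
/-!
The bilinear map `φ` induces the `(E →L G)`-valued set function `s ↦ φ 𝟙ₛ`, which is finitely
additive and dominated by `‖φ‖ μ`; integrating `E`-valued functions against it (`setToL1`) gives
an operator `T` with `‖T‖ ≤ ‖φ‖`. On indicators, `T (f(·)η) = φ f η` is a computation, and both
sides are continuous in `f`, so it holds everywhere. Since `‖f(·)η‖ = ‖f‖ ‖η‖`, this also gives
`‖φ‖ ≤ ‖T‖`. Uniqueness holds because the functions `f(·)η` include all `E`-valued indicators,
which span a dense subspace of `L¹(Ω; E)`.
-/

open MeasureTheory
open scoped ENNReal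

namespace MeasureTheory

variable {Ω E F : Type*} [MeasurableSpace Ω] {p : ℝ≥0∞} {μ : Measure Ω}
  [NormedAddCommGroup E] [NormedSpace ℝ E] [NormedAddCommGroup F] [NormedSpace ℝ F]

theorem indicatorConstLp_smul {s : Set Ω} (hs : MeasurableSet s) (hμs : μ s ≠ ∞) (c : ℝ)
    (x : E) : indicatorConstLp p hs hμs (c • x) = c • indicatorConstLp p hs hμs x := by
  refine Lp.ext ?_
  filter_upwards [indicatorConstLp_coeFn (c := c • x), indicatorConstLp_coeFn (c := x),
    Lp.coeFn_smul c (indicatorConstLp p hs hμs x)] with ω hcx hx hsmul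
  rw [hcx, hsmul, Pi.smul_apply, hx, Set.indicator_const_smul_apply]

namespace Lp

theorem norm_eq_norm_mul_norm_of_ae_eq_smul (f : Lp ℝ p μ) (η : E) (g : Lp E p μ)
    (hg : (g : Ω → E) =ᵐ[μ] fun ω => f ω • η) : ‖g‖ = ‖f‖ * ‖η‖ := by
  have hnorm : eLpNorm g p μ = eLpNorm (‖η‖ • ⇑f) p μ := by
    refine eLpNorm_congr_norm_ae ?_
    filter_upwards [hg] with ω hω
    simp [hω, norm_smul, mul_comm]
  rw [norm_def, hnorm, eLpNorm_const_smul, ENNReal.toReal_mul, ← norm_def, mul_comm]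
  simp

variable (p μ) in
noncomputable def smulConstL [Fact (1 ≤ p)] (η : E) : Lp ℝ p μ →L[ℝ] Lp E p μ :=
  (ContinuousLinearMap.toSpanSingleton ℝ η).compLpL p μ

theorem coeFn_smulConstL [Fact (1 ≤ p)] (η : E) (f : Lp ℝ p μ) :
    (smulConstL p μ η f : Ω → E) =ᵐ[μ] fun ω => f ω • η := by
  filter_upwards [(ContinuousLinearMap.toSpanSingleton ℝ η).coeFn_compLpL f] with ω hω
  rw [smulConstL, hω, ContinuousLinearMap.toSpanSingleton_apply]

theorem smulConstL_indicatorConstLp [Fact (1 ≤ p)] {s : Set Ω} (hs : MeasurableSet s)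
    (hμs : μ s ≠ ∞) (c : ℝ) (η : E) :
    smulConstL p μ η (indicatorConstLp p hs hμs c) = indicatorConstLp p hs hμs (c • η) := by
  refine Lp.ext ?_
  filter_upwards [coeFn_smulConstL η (indicatorConstLp p hs hμs c),
    indicatorConstLp_coeFn (c := c), indicatorConstLp_coeFn (c := c • η)] with ω hη hc hcη
  rw [hη, hc, hcη, ← Set.indicator_smul_const_apply]

theorem ext_indicatorConstLp [Fact (1 ≤ p)] (hp : p ≠ ∞) {T T' : Lp E p μ →L[ℝ] F}
    (h : ∀ {s : Set Ω} (hs : MeasurableSet s) (hμs : μ s ≠ ∞) (c : E),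
      T (indicatorConstLp p hs hμs c) = T' (indicatorConstLp p hs hμs c)) : T = T' := by
  ext f
  induction f using Lp.induction hp with
  | indicatorConst c hs hμs => exact h hs hμs.ne c
  | add _ _ _ hf hg => rw [map_add, map_add, hf, hg]
  | isClosed => exact isClosed_eq T.continuous T'.continuous

theorem ext_smulConstL [Fact (1 ≤ p)] (hp : p ≠ ∞) {T T' : Lp E p μ →L[ℝ] F}
    (h : ∀ (f : Lp ℝ p μ) (η : E), T (smulConstL p μ η f) = T' (smulConstL p μ η f)) :
    T = T' :=
  ext_indicatorConstLp hp fun hs hμs c => by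
    simpa only [smulConstL_indicatorConstLp, one_smul] using h (indicatorConstLp p hs hμs 1) c

end Lp

namespace L1

open Classical in
noncomputable def setFunctionOfCLM (φ : Lp ℝ 1 μ →L[ℝ] F) (s : Set Ω) : F :=
  if h : MeasurableSet s ∧ μ s ≠ ∞ then φ (indicatorConstLp 1 h.1 h.2 1) else 0

theorem setFunctionOfCLM_of_measurableSet (φ : Lp ℝ 1 μ →L[ℝ] F) {s : Set Ω}
    (hs : MeasurableSet s) (hμs : μ s ≠ ∞) :
    setFunctionOfCLM φ s = φ (indicatorConstLp 1 hs hμs 1) :=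
  dif_pos ⟨hs, hμs⟩

theorem dominatedFinMeasAdditive_setFunctionOfCLM (φ : Lp ℝ 1 μ →L[ℝ] F) :
    DominatedFinMeasAdditive μ (setFunctionOfCLM φ) ‖φ‖ := by
  refine ⟨fun s t hs ht hμs hμt hst => ?_, fun s hs hμs => ?_⟩
  · rw [setFunctionOfCLM_of_measurableSet φ (hs.union ht) (measure_union_ne_top hμs hμt),
      setFunctionOfCLM_of_measurableSet φ hs hμs, setFunctionOfCLM_of_measurableSet φ ht hμt,
      indicatorConstLp_disjoint_union hs ht hμs hμt hst, map_add]
  · rw [setFunctionOfCLM_of_measurableSet φ hs hμs.ne]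
    calc ‖φ (indicatorConstLp 1 hs hμs.ne 1)‖ ≤ ‖φ‖ * ‖indicatorConstLp 1 hs hμs.ne (1 : ℝ)‖ :=
          φ.le_opNorm _
      _ = ‖φ‖ * μ.real s := by
          rw [norm_indicatorConstLp one_ne_zero ENNReal.one_ne_top]
          simp [Measure.real]

variable [CompleteSpace F]

noncomputable def tensorLift (φ : Lp ℝ 1 μ →L[ℝ] E →L[ℝ] F) : Lp E 1 μ →L[ℝ] F :=
  setToL1 (dominatedFinMeasAdditive_setFunctionOfCLM φ)

theorem tensorLift_smulConstL (φ : Lp ℝ 1 μ →L[ℝ] E →L[ℝ] F) (f : Lp ℝ 1 μ) (η : E) :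
    tensorLift φ (Lp.smulConstL 1 μ η f) = φ f η := by
  suffices (tensorLift φ).comp (Lp.smulConstL 1 μ η) = φ.flip η from
    DFunLike.congr_fun this f
  refine Lp.ext_indicatorConstLp ENNReal.one_ne_top fun hs hμs c => ?_
  have hc : indicatorConstLp 1 hs hμs c = c • indicatorConstLp 1 hs hμs (1 : ℝ) := by
    rw [← indicatorConstLp_smul, smul_eq_mul, mul_one]
  rw [ContinuousLinearMap.comp_apply, Lp.smulConstL_indicatorConstLp, tensorLift,
    setToL1_indicatorConstLp, setFunctionOfCLM_of_measurableSet φ hs hμs,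
    ContinuousLinearMap.flip_apply, hc, map_smul, map_smul, smul_apply]

theorem norm_tensorLift (φ : Lp ℝ 1 μ →L[ℝ] E →L[ℝ] F) : ‖tensorLift φ‖ = ‖φ‖ := by
  refine le_antisymm (norm_setToL1_le _ (norm_nonneg φ)) ?_
  refine φ.opNorm_le_bound (norm_nonneg _) fun f => ?_
  refine (φ f).opNorm_le_bound (by positivity) fun η => ?_
  calc ‖φ f η‖ = ‖tensorLift φ (Lp.smulConstL 1 μ η f)‖ := by rw [tensorLift_smulConstL]
    _ ≤ ‖tensorLift φ‖ * ‖Lp.smulConstL 1 μ η f‖ := (tensorLift φ).le_opNorm _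
    _ = ‖tensorLift φ‖ * ‖f‖ * ‖η‖ := by
        rw [Lp.norm_eq_norm_mul_norm_of_ae_eq_smul f η _ (Lp.coeFn_smulConstL η f), mul_assoc]

end L1

end MeasureTheory

theorem statement5_general {Ω E G : Type*} [MeasurableSpace Ω] (μ : Measure Ω)
    [NormedAddCommGroup E] [NormedSpace ℝ E]
    [NormedAddCommGroup G] [NormedSpace ℝ G] [CompleteSpace G]
    (φ : Lp ℝ 1 μ →L[ℝ] E →L[ℝ] G) :
    (∀ (f : Lp ℝ 1 μ) (η : E) (g : Lp E 1 μ),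
        (g : Ω → E) =ᵐ[μ] (fun ω => f ω • η) → ‖g‖ = ‖f‖ * ‖η‖) ∧
    (∃! T : Lp E 1 μ →L[ℝ] G,
      ∀ (f : Lp ℝ 1 μ) (η : E) (g : Lp E 1 μ),
        (g : Ω → E) =ᵐ[μ] (fun ω => f ω • η) → T g = φ f η) ∧
    (∀ T : Lp E 1 μ →L[ℝ] G,
      (∀ (f : Lp ℝ 1 μ) (η : E) (g : Lp E 1 μ),
        (g : Ω → E) =ᵐ[μ] (fun ω => f ω • η) → T g = φ f η) →
      ‖T‖ = ‖φ‖) := by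
  have eq_smulConstL {f : Lp ℝ 1 μ} {η : E} {g : Lp E 1 μ}
      (hg : (g : Ω → E) =ᵐ[μ] fun ω => f ω • η) : g = Lp.smulConstL 1 μ η f :=
    Lp.ext (hg.trans (Lp.coeFn_smulConstL η f).symm)
  have lift_spec : ∀ (f : Lp ℝ 1 μ) (η : E) (g : Lp E 1 μ),
      (g : Ω → E) =ᵐ[μ] (fun ω => f ω • η) → L1.tensorLift φ g = φ f η := by
    intro f η g hg
    rw [eq_smulConstL hg, L1.tensorLift_smulConstL]
  have unique : ∀ T : Lp E 1 μ →L[ℝ] G,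
      (∀ (f : Lp ℝ 1 μ) (η : E) (g : Lp E 1 μ),
        (g : Ω → E) =ᵐ[μ] (fun ω => f ω • η) → T g = φ f η) → T = L1.tensorLift φ :=
    fun T hT => Lp.ext_smulConstL ENNReal.one_ne_top fun f η => by
      rw [hT f η _ (Lp.coeFn_smulConstL η f), L1.tensorLift_smulConstL]
  exact ⟨Lp.norm_eq_norm_mul_norm_of_ae_eq_smul, ⟨L1.tensorLift φ, lift_spec, unique⟩,
    fun T hT => by rw [unique T hT, L1.norm_tensorLift]⟩

/-- **`L¹(Ω) ⊗̂_π E ≅ L¹(Ω; E)` (universal property form).** For every bounded bilinear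
map `φ : L¹(Ω) × E → G` there is a unique bounded linear `T : L¹(Ω; E) → G` with
`T(f(·)η) = φ(f, η)`; moreover `‖T‖ = ‖φ‖` and `‖f(·)η‖_{L¹(Ω;E)} = ‖f‖₁ ‖η‖`.
Bounded bilinear maps are encoded as continuous linear maps `L¹(Ω) →L E →L G`, whose
operator norm is exactly the bilinear norm. -/
theorem statement5 {Ω E G : Type*} [MeasurableSpace Ω] (μ : Measure Ω)
    [NormedAddCommGroup E] [NormedSpace ℝ E] [CompleteSpace E]
    [NormedAddCommGroup G] [NormedSpace ℝ G] [CompleteSpace G]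
    (φ : Lp ℝ 1 μ →L[ℝ] E →L[ℝ] G) :
    (∀ (f : Lp ℝ 1 μ) (η : E) (g : Lp E 1 μ),
        (g : Ω → E) =ᵐ[μ] (fun ω => f ω • η) → ‖g‖ = ‖f‖ * ‖η‖) ∧
    (∃! T : Lp E 1 μ →L[ℝ] G,
      ∀ (f : Lp ℝ 1 μ) (η : E) (g : Lp E 1 μ),
        (g : Ω → E) =ᵐ[μ] (fun ω => f ω • η) → T g = φ f η) ∧
    (∀ T : Lp E 1 μ →L[ℝ] G,
      (∀ (f : Lp ℝ 1 μ) (η : E) (g : Lp E 1 μ),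
        (g : Ω → E) =ᵐ[μ] (fun ω => f ω • η) → T g = φ f η) →
      ‖T‖ = ‖φ‖) :=
  statement5_general μ φ
end

section
/- (Arendt–Thomaschewski.) Let (Ω, Σ, μ) be a σ-finite measure space, E a separable Banach space, and p ∈ [1, ∞]. Then for every local operator T ∈ ℒ(L^p(Ω; E)) there exists a function M: Ω → ℒ(E) with M(·)x ∈ L^∞(Ω; E) for every x ∈ E, such that (Tf)(ω) = M(ω) f(ω) for μ-almost every ω ∈ Ω, for every f ∈ L^p(Ω; E). -/
/-!
Fix a weight `w > 0` in `L^p` (it exists by σ-finiteness). Locality makes `T` pointwise bounded,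
`‖(Tf)(ω)‖ ≤ ‖T‖ ‖f(ω)‖` a.e., because `‖1_s Tf‖_p = ‖T(1_s f)‖_p ≤ ‖T‖ ‖1_s f‖_p` for every
measurable `s`. Hence, on a countable dense additive subgroup `D ⊆ E`, the maps
`d ↦ w(ω)⁻¹ (T(w d))(ω)` are for a.e. `ω` additive and `‖T‖`-bounded, so they extend to operators
`M(ω)`. For `f ∈ L^p` the same bound applied to `f - w d` gives
`‖(Tf)(ω) - w(ω) M(ω) d‖ ≤ ‖T‖ ‖f(ω) - w(ω) d‖` for all `d ∈ D`, and letting `w(ω) d → f(ω)`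
yields `(Tf)(ω) = M(ω) f(ω)`.
-/

open MeasureTheory Filter Set
open scoped ENNReal Topology

section Domination

variable {Ω F G : Type*} [MeasurableSpace Ω] {μ : Measure Ω} {p : ℝ≥0∞}
  [NormedAddCommGroup F] [NormedAddCommGroup G] {f : Ω → F} {g : Ω → G} {C : ℝ}

lemma ae_norm_le_mul_of_eLpNorm_indicator_le_of_lt (hp : p ≠ 0) (hf : StronglyMeasurable f)
    (hg : StronglyMeasurable g) (hgp : MemLp g p μ) (hC : 0 ≤ C)
    (h : ∀ s, MeasurableSet s →
      eLpNorm (s.indicator f) p μ ≤ ENNReal.ofReal C * eLpNorm (s.indicator g) p μ)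
    {b : ℝ} (hCb : C < b) : ∀ᵐ ω ∂μ, ‖f ω‖ ≤ b * ‖g ω‖ := by
  have hb : 0 ≤ b := hC.trans hCb.le
  set s := {ω | b * ‖g ω‖ ≤ ‖f ω‖}
  have hs : MeasurableSet s := measurableSet_le (hg.norm.const_mul b).measurable hf.norm.measurable
  have hlower : ENNReal.ofReal b * eLpNorm (s.indicator g) p μ ≤ eLpNorm (s.indicator f) p μ := by
    rw [← eLpNorm_norm, ← Real.enorm_of_nonneg hb, ← eLpNorm_const_smul]
    refine eLpNorm_mono fun ω => ?_
    by_cases hω : ω ∈ s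
    · simpa [indicator_of_mem hω, abs_of_nonneg hb] using show b * ‖g ω‖ ≤ ‖f ω‖ from hω
    · simp [hω]
  -- `b ‖1_s g‖_p ≤ ‖1_s f‖_p ≤ C ‖1_s g‖_p` with `C < b` forces `1_s g = 0`, and then `1_s f = 0`
  have hg_zero : eLpNorm (s.indicator g) p μ = 0 := by
    by_contra hne
    have := hlower.trans (h s hs)
    rw [ENNReal.mul_le_mul_iff_left hne (hgp.indicator hs).eLpNorm_ne_top] at this
    exact hCb.not_ge ((ENNReal.ofReal_le_ofReal_iff hC).mp this)
  have hf_zero : s.indicator f =ᵐ[μ] 0 := by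
    rw [← eLpNorm_eq_zero_iff (hf.indicator hs).aestronglyMeasurable hp, ← nonpos_iff_eq_zero]
    simpa [hg_zero] using h s hs
  filter_upwards [hf_zero] with ω hω
  by_cases hωs : ω ∈ s
  · simp only [indicator_of_mem hωs, Pi.zero_apply] at hω
    simp [hω, mul_nonneg hb (norm_nonneg _)]
  · exact (not_le.mp hωs).le

lemma ae_norm_le_mul_of_eLpNorm_indicator_le (hp : p ≠ 0) (hf : StronglyMeasurable f)
    (hg : StronglyMeasurable g) (hgp : MemLp g p μ) (hC : 0 ≤ C)
    (h : ∀ s, MeasurableSet s →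
      eLpNorm (s.indicator f) p μ ≤ ENNReal.ofReal C * eLpNorm (s.indicator g) p μ) :
    ∀ᵐ ω ∂μ, ‖f ω‖ ≤ C * ‖g ω‖ := by
  have hlt : ∀ k : ℕ, C < C + 1 / (k + 1) := fun k => lt_add_of_pos_right C (by positivity)
  filter_upwards [ae_all_iff.2 fun k =>
    ae_norm_le_mul_of_eLpNorm_indicator_le_of_lt hp hf hg hgp hC h (hlt k)] with ω hω
  have hlim : Tendsto (fun k : ℕ => (C + 1 / (k + 1)) * ‖g ω‖) atTop (𝓝 (C * ‖g ω‖)) := by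
    simpa using (tendsto_one_div_add_atTop_nhds_zero_nat.const_add C).mul_const ‖g ω‖
  exact ge_of_tendsto' hlim hω

end Domination

section Weight

variable {Ω E : Type*} [MeasurableSpace Ω]

lemma exists_pos_memLp (μ : Measure Ω) [SigmaFinite μ] (p : ℝ≥0∞) :
    ∃ w : Ω → ℝ, (∀ ω, 0 < w ω) ∧ MemLp w p μ := by
  rcases eq_or_ne p ∞ with rfl | hp
  · exact ⟨1, fun _ => one_pos, memLp_top_const 1⟩
  rcases eq_or_ne p 0 with rfl | hp0
  · exact ⟨1, fun _ => one_pos, memLp_zero_iff_aestronglyMeasurable.2 aestronglyMeasurable_const⟩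
  obtain ⟨g, hg_pos, hg_meas, hg_int⟩ := exists_pos_lintegral_lt_of_sigmaFinite μ one_ne_zero
  refine ⟨fun ω => (g ω : ℝ) ^ p.toReal⁻¹, fun ω => by have := hg_pos ω; positivity, ?_⟩
  have hw_meas : AEStronglyMeasurable (fun ω => (g ω : ℝ) ^ p.toReal⁻¹) μ :=
    (hg_meas.coe_nnreal_real.pow_const _).aestronglyMeasurable
  rw [← memLp_norm_rpow_iff hw_meas hp0 hp, ENNReal.div_self hp0 hp, memLp_one_iff_integrable]
  have hpt : p.toReal ≠ 0 := (ENNReal.toReal_pos hp0 hp).ne'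
  refine (integrable_toReal_of_lintegral_ne_top hg_meas.coe_nnreal_ennreal.aemeasurable
    (hg_int.trans ENNReal.one_lt_top).ne).congr (ae_of_all _ fun ω => ?_)
  dsimp only
  rw [ENNReal.coe_toReal, Real.norm_eq_abs, abs_of_nonneg (by positivity),
    ← Real.rpow_mul (g ω).coe_nonneg, inv_mul_cancel₀ hpt, Real.rpow_one]

variable {μ : Measure Ω} {p : ℝ≥0∞} [NormedAddCommGroup E] [NormedSpace ℝ E] {w : Ω → ℝ}

lemma MeasureTheory.MemLp.smul_const (hw : MemLp w p μ) (x : E) :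
    MemLp (fun ω => w ω • x) p μ :=
  (ContinuousLinearMap.smulRight (1 : ℝ →L[ℝ] ℝ) x).comp_memLp' hw

noncomputable def MeasureTheory.MemLp.smulConstHom (hw : MemLp w p μ) : E →+ Lp E p μ :=
  AddMonoidHom.mk' (fun x => (hw.smul_const x).toLp _) fun x y =>
    (MemLp.toLp_congr _ ((hw.smul_const x).add (hw.smul_const y))
      (ae_of_all _ fun ω => smul_add (w ω) x y)).trans (MemLp.toLp_add _ _)

lemma MeasureTheory.MemLp.coeFn_smulConstHom (hw : MemLp w p μ) (x : E) :
    hw.smulConstHom x =ᵐ[μ] fun ω => w ω • x :=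
  (hw.smul_const x).coeFn_toLp

end Weight

section Extension

variable {E : Type*} [NormedAddCommGroup E] [NormedSpace ℝ E]

lemma exists_continuousLinearMap_extension [CompleteSpace E] {D : Submodule ℤ E}
    (hD : Dense (D : Set E)) (φ : D →+ E) {C : ℝ} (hφ : ∀ d, ‖φ d‖ ≤ C * ‖(d : E)‖) :
    ∃ L : E →L[ℝ] E, (∀ d : D, L d = φ d) ∧ ∀ x, ‖L x‖ ≤ C * ‖x‖ := by
  let φL : D →L[ℤ] E := ⟨φ.toIntLinearMap, AddMonoidHomClass.continuous_of_bound φ C hφ⟩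
  have hdense : DenseRange D.subtypeL := by simpa [DenseRange] using hD
  have hind : IsUniformInducing D.subtypeL := isUniformEmbedding_subtype_val.isUniformInducing
  set L₀ := φL.extend D.subtypeL
  refine ⟨L₀.toAddMonoidHom.toRealLinearMap L₀.continuous, fun d => φL.extend_eq hdense hind d, ?_⟩
  refine isClosed_property hdense (isClosed_le (by fun_prop) (by fun_prop)) fun d => ?_
  simpa using (φL.extend_eq hdense hind d).symm ▸ hφ d

lemma eq_apply_of_forall_dense_norm_sub_le {D : Set E} (hD : Dense D) (L : E →L[ℝ] E)
    {y v : E} {c C : ℝ} (hc : c ≠ 0) (h : ∀ d ∈ D, ‖y - c • L d‖ ≤ C * ‖v - c • d‖) :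
    y = L v := by
  have h' : ∀ x, ‖y - c • L x‖ ≤ C * ‖v - c • x‖ :=
    hD.induction h (isClosed_le (by fun_prop) (by fun_prop))
  simpa [smul_inv_smul₀ hc, sub_eq_zero] using h' (c⁻¹ • v)

variable {Ω : Type*} [MeasurableSpace Ω] {μ : Measure Ω}

lemma exists_ae_eq_continuousLinearMap_of_dense [CompleteSpace E] {D : Submodule ℤ E}
    (hD : Dense (D : Set E)) {G : E → Ω → E} {C : ℝ} (hC : 0 ≤ C)
    (hadd : ∀ᵐ ω ∂μ, ∀ d d' : D, G (d + d') ω = G d ω + G d' ω)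
    (hbdd : ∀ᵐ ω ∂μ, ∀ d : D, ‖G d ω‖ ≤ C * ‖(d : E)‖) :
    ∃ M : Ω → E →L[ℝ] E, (∀ ω x, ‖M ω x‖ ≤ C * ‖x‖) ∧ ∀ᵐ ω ∂μ, ∀ d : D, M ω d = G d ω := by
  have hM : ∀ ω, ∃ L : E →L[ℝ] E, (∀ x, ‖L x‖ ≤ C * ‖x‖) ∧
      ((∀ d d' : D, G (d + d') ω = G d ω + G d' ω) → (∀ d : D, ‖G d ω‖ ≤ C * ‖(d : E)‖) →
        ∀ d : D, L d = G d ω) := by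
    intro ω
    by_cases h : (∀ d d' : D, G (d + d') ω = G d ω + G d' ω) ∧ ∀ d : D, ‖G d ω‖ ≤ C * ‖(d : E)‖
    · obtain ⟨L, hLD, hL⟩ :=
        exists_continuousLinearMap_extension hD (AddMonoidHom.mk' (fun d : D => G d ω) h.1) h.2
      exact ⟨L, hL, fun _ _ => hLD⟩
    · exact ⟨0, fun x => by simpa using mul_nonneg hC (norm_nonneg x),
        fun h₁ h₂ => (h ⟨h₁, h₂⟩).elim⟩
  choose M hM_bound hM_D using hM
  exact ⟨M, hM_bound, by filter_upwards [hadd, hbdd] with ω h₁ h₂ using hM_D ω h₁ h₂⟩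

end Extension

section LocalOperator

variable {Ω E : Type*} [MeasurableSpace Ω] {μ : Measure Ω} {p : ℝ≥0∞}
  [NormedAddCommGroup E] [NormedSpace ℝ E] [Fact (1 ≤ p)]

def IsLocalOperator (T : Lp E p μ →L[ℝ] Lp E p μ) : Prop :=
  ∀ f : Lp E p μ, ∀ᵐ ω ∂μ, f ω = 0 → T f ω = 0

namespace IsLocalOperator

variable {T : Lp E p μ →L[ℝ] Lp E p μ}

lemma ae_eq_indicator (hT : IsLocalOperator T) {f g : Lp E p μ} {s : Set Ω}
    (hg : g =ᵐ[μ] s.indicator f) : T g =ᵐ[μ] s.indicator (T f) := by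
  filter_upwards [hT g, hT (f - g), Lp.coeFn_sub f g, map_sub T f g ▸ Lp.coeFn_sub (T f) (T g),
    hg] with ω hTg hTfg hfg hTfg_sub hgω
  by_cases hω : ω ∈ s
  · rw [indicator_of_mem hω] at hgω ⊢
    have := hTfg (by rw [hfg, Pi.sub_apply, hgω, sub_self])
    rwa [hTfg_sub, Pi.sub_apply, sub_eq_zero, eq_comm] at this
  · rw [indicator_of_notMem hω] at hgω ⊢
    exact hTg hgω

lemma ae_norm_apply_le (hT : IsLocalOperator T) (f : Lp E p μ) :
    ∀ᵐ ω ∂μ, ‖T f ω‖ ≤ ‖T‖ * ‖f ω‖ := by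
  have hp : p ≠ 0 := (zero_lt_one.trans_le Fact.out).ne'
  refine ae_norm_le_mul_of_eLpNorm_indicator_le hp (Lp.stronglyMeasurable _)
    (Lp.stronglyMeasurable _) (Lp.memLp f) (norm_nonneg T) fun s hs => ?_
  set fs := ((Lp.memLp f).indicator hs).toLp _
  have hfs : fs =ᵐ[μ] s.indicator f := MemLp.coeFn_toLp _
  calc eLpNorm (s.indicator (T f)) p μ = ‖T fs‖ₑ := by
        rw [Lp.enorm_def, eLpNorm_congr_ae (hT.ae_eq_indicator hfs)]
    _ ≤ ‖T‖ₑ * ‖fs‖ₑ := T.le_opENorm fs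
    _ = ENNReal.ofReal ‖T‖ * eLpNorm (s.indicator f) p μ := by
        rw [Lp.enorm_def, eLpNorm_congr_ae hfs, ofReal_norm]

theorem exists_multiplier [SigmaFinite μ] [CompleteSpace E] [TopologicalSpace.SeparableSpace E]
    (hT : IsLocalOperator T) : ∃ M : Ω → E →L[ℝ] E, (∀ ω x, ‖M ω x‖ ≤ ‖T‖ * ‖x‖) ∧
      ∀ f : Lp E p μ, ∀ᵐ ω ∂μ, T f ω = M ω (f ω) := by
  obtain ⟨w, hw_pos, hw⟩ := exists_pos_memLp μ p
  set e : E →+ Lp E p μ := hw.smulConstHom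
  set D := Submodule.span ℤ (range (TopologicalSpace.denseSeq E))
  have hD : Dense (D : Set E) := (TopologicalSpace.denseRange_denseSeq E).mono Submodule.subset_span
  -- `M ω` is determined on `D` by `T (w • d) = w • M d`
  have hadd : ∀ᵐ ω ∂μ, ∀ d d' : D,
      (w ω)⁻¹ • T (e (d + d')) ω = (w ω)⁻¹ • T (e d) ω + (w ω)⁻¹ • T (e d') ω := by
    refine ae_all_iff.2 fun d => ae_all_iff.2 fun d' => ?_
    filter_upwards [Lp.coeFn_add (T (e d)) (T (e d'))] with ω h
    rw [map_add, map_add, h, Pi.add_apply, smul_add]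
  have hbdd : ∀ᵐ ω ∂μ, ∀ d : D, ‖(w ω)⁻¹ • T (e d) ω‖ ≤ ‖T‖ * ‖(d : E)‖ := by
    refine ae_all_iff.2 fun d => ?_
    filter_upwards [hT.ae_norm_apply_le (e d), hw.coeFn_smulConstHom (d : E)] with ω h he
    rw [he, norm_smul, Real.norm_of_nonneg (hw_pos ω).le] at h
    rw [norm_smul, Real.norm_of_nonneg (inv_pos.2 (hw_pos ω)).le, inv_mul_le_iff₀ (hw_pos ω)]
    linarith
  obtain ⟨M, hM_bound, hM_D⟩ := exists_ae_eq_continuousLinearMap_of_dense hD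
    (G := fun x ω => (w ω)⁻¹ • T (e x) ω) (norm_nonneg T) hadd hbdd
  refine ⟨M, hM_bound, fun f => ?_⟩
  have hdiff : ∀ d : E, ∀ᵐ ω ∂μ, ‖T f ω - T (e d) ω‖ ≤ ‖T‖ * ‖f ω - w ω • d‖ := fun d => by
    filter_upwards [hT.ae_norm_apply_le (f - e d), Lp.coeFn_sub f (e d),
      map_sub T f (e d) ▸ Lp.coeFn_sub (T f) (T (e d)), hw.coeFn_smulConstHom d] with ω h h₁ h₂ he
    rwa [h₂, h₁, Pi.sub_apply, Pi.sub_apply, he] at h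
  filter_upwards [hM_D, ae_all_iff.2 fun d : D => hdiff d] with ω hMω hω
  refine eq_apply_of_forall_dense_norm_sub_le hD (M ω) (C := ‖T‖) (hw_pos ω).ne' fun d hd => ?_
  rw [hMω ⟨d, hd⟩, smul_inv_smul₀ (hw_pos ω).ne']
  exact hω ⟨d, hd⟩

end IsLocalOperator

end LocalOperator

/-- **Arendt–Thomaschewski: local operators are multiplication operators.** Let
`(Ω, Σ, μ)` be σ-finite, `E` a separable Banach space and `p ∈ [1, ∞]`. An operator
`T ∈ ℒ(L^p(Ω; E))` is *local* if `Tf = 0` a.e. on `{f = 0}` for every `f`. Every local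
operator is given by a multiplier `M : Ω → ℒ(E)` with `M(·)x ∈ L^∞(Ω; E)` for all `x ∈ E`:
`(Tf)(ω) = M(ω) f(ω)` a.e. for every `f ∈ L^p(Ω; E)`. -/
theorem statement10 {Ω E : Type*} [MeasurableSpace Ω] (μ : Measure Ω) [SigmaFinite μ]
    [NormedAddCommGroup E] [NormedSpace ℝ E] [CompleteSpace E]
    [TopologicalSpace.SeparableSpace E]
    (p : ℝ≥0∞) [Fact (1 ≤ p)]
    (T : Lp E p μ →L[ℝ] Lp E p μ)
    (hT : ∀ f : Lp E p μ, ∀ᵐ ω ∂μ, f ω = 0 → T f ω = 0) :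
    ∃ M : Ω → E →L[ℝ] E,
      (∀ x : E, MemLp (fun ω => M ω x) ⊤ μ) ∧
      ∀ f : Lp E p μ, ∀ᵐ ω ∂μ, T f ω = M ω (f ω) := by
  obtain ⟨M, hM_bound, hM⟩ := IsLocalOperator.exists_multiplier hT
  refine ⟨M, fun x => ?_, hM⟩
  obtain ⟨w, hw_pos, hw⟩ := exists_pos_memLp μ p
  -- `M x = w⁻¹ • T (w • x)` exhibits `M x` as measurable
  have hMx : (fun ω => M ω x) =ᵐ[μ] fun ω => (w ω)⁻¹ • T (hw.smulConstHom x) ω := by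
    filter_upwards [hM (hw.smulConstHom x), hw.coeFn_smulConstHom x] with ω h he
    rw [h, he, map_smul, inv_smul_smul₀ (hw_pos ω).ne']
  have hmeas : AEStronglyMeasurable (fun ω => M ω x) μ :=
    (hw.1.aemeasurable.inv.aestronglyMeasurable.smul (Lp.aestronglyMeasurable _)).congr hMx.symm
  exact memLp_top_of_bound hmeas _ (ae_of_all _ fun ω => hM_bound ω x)
end

section
/- Let F be a Banach space such that the dual F' is separable, and let (Ω, Σ, μ) be a measure space. Then for a bounded function M: Ω → ℒ(F') the following are equivalent: (i) ω ↦ ⟨M(ω)v', v⟩ is measurable for all v' ∈ F' and v ∈ F; (ii) for every v' ∈ F' the function M(·)v': Ω → F' is (a.e. equal to) a strongly measurable function. In other words, L^∞_{σ*}(Ω; ℒ(F')) = L^∞(Ω; ℒ_s(F')), where ℒ(F') is regarded as the dual of the projective tensor product F' ⊗̂_π F. -/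
/-!
Since `F'` is separable, countably many unit vectors of `F` already compute the norm of every
functional; hence the distance from `M(ω)v'` to a fixed functional is a countable supremum of
measurable functions of `ω`. In a separable metric space the open balls generate the Borel
σ-algebra, so `M(·)v'` is measurable with respect to the null-completed σ-algebra, which gives
a.e. strong measurability. The converse is evaluation at `v`.
-/

open MeasureTheory TopologicalSpace Metric Set

theorem measurable_of_measurable_dist {α E : Type*} [MeasurableSpace α] [PseudoMetricSpace E]
    [SecondCountableTopology E] [MeasurableSpace E] [BorelSpace E] {f : α → E}
    (hf : ∀ c, Measurable fun a => dist (f a) c) : Measurable f := by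
  refine measurable_of_isOpen fun U hU => ?_
  choose! r hr hrU using fun x (hx : x ∈ U) => Metric.isOpen_iff.1 hU x hx
  obtain ⟨T, hTU, hTc, hT⟩ := isOpen_biUnion_countable U (fun x => ball x (r x))
    fun _ _ => isOpen_ball
  have hU_eq : U = ⋃ x ∈ T, ball x (r x) := by
    rw [hT]
    exact Subset.antisymm (fun x hx => mem_biUnion hx (mem_ball_self (hr x hx)))
      (iUnion₂_subset hrU)
  rw [hU_eq, preimage_iUnion₂]
  exact .biUnion hTc fun c _ => measurableSet_lt (hf c) measurable_const

namespace ContinuousLinearMap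

variable {𝕜 E F : Type*} [DenselyNormedField 𝕜] [NormedAddCommGroup E] [NormedSpace 𝕜 E]
  [SeminormedAddCommGroup F] [NormedSpace 𝕜 F]

theorem exists_countable_norming_set [SeparableSpace (E →L[𝕜] F)] :
    ∃ s : Set E, s.Countable ∧ s ⊆ closedBall 0 1 ∧ ∀ T : E →L[𝕜] F, ‖T‖ = ⨆ x : s, ‖T x‖ := by
  obtain ⟨d, hd⟩ := exists_dense_seq (E →L[𝕜] F)
  have hv : ∀ m k : ℕ, ∃ x : E, ‖x‖ < 1 ∧ ‖d m‖ - 1 / (k + 1) < ‖d m x‖ := fun m k =>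
    (d m).exists_lt_apply_of_lt_opNorm (sub_lt_self _ Nat.one_div_pos_of_nat)
  choose v hv_norm hv_apply using hv
  refine ⟨range (Function.uncurry v), countable_range _, ?_, fun T => ?_⟩
  · rintro _ ⟨⟨m, k⟩, rfl⟩
    exact mem_closedBall_zero_iff.2 (hv_norm m k).le
  have hle : ∀ x : range (Function.uncurry v), ‖T x‖ ≤ ‖T‖ := by
    rintro ⟨_, ⟨m, k⟩, rfl⟩
    exact (T.le_of_opNorm_le_of_le le_rfl (hv_norm m k).le).trans_eq (mul_one _)
  refine le_antisymm (le_of_forall_pos_lt_add fun ε hε => ?_) (Real.iSup_le hle (norm_nonneg T))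
  obtain ⟨m, hm⟩ := hd.exists_dist_lt T (by positivity : (0 : ℝ) < ε / 3)
  obtain ⟨k, hk⟩ := exists_nat_one_div_lt (by positivity : (0 : ℝ) < ε / 3)
  have hdm : ‖d m (v m k)‖ ≤ ‖T (v m k)‖ + ε / 3 := by
    calc ‖d m (v m k)‖ ≤ ‖T (v m k)‖ + ‖(d m - T) (v m k)‖ := by
          simpa only [sub_apply] using norm_le_insert' (d m (v m k)) (T (v m k))
      _ ≤ ‖T (v m k)‖ + ε / 3 := by
          gcongr
          refine (d m - T).le_of_opNorm_le_of_le ?_ (hv_norm m k).le |>.trans_eq (mul_one _)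
          rw [← dist_eq_norm, dist_comm]; exact hm.le
  calc ‖T‖ ≤ ‖d m‖ + ε / 3 := by
        linarith [norm_le_insert' T (d m), dist_eq_norm T (d m)]
    _ < ‖T (v m k)‖ + ε := by linarith [hv_apply m k]
    _ ≤ (⨆ x : range (Function.uncurry v), ‖T x‖) + ε := by
        gcongr
        exact le_ciSup (f := fun x : range (Function.uncurry v) => ‖T x‖)
          ⟨‖T‖, forall_mem_range.2 hle⟩ ⟨_, mem_range_self (m, k)⟩

variable {Ω : Type*} [MeasurableSpace F] [OpensMeasurableSpace F] [SeparableSpace (E →L[𝕜] F)]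

theorem measurable_of_measurable_apply [MeasurableSpace Ω] [MeasurableSpace (E →L[𝕜] F)]
    [BorelSpace (E →L[𝕜] F)] {f : Ω → E →L[𝕜] F} (hf : ∀ x, Measurable fun ω => f ω x) :
    Measurable f := by
  have := UniformSpace.secondCountable_of_separable (E →L[𝕜] F)
  obtain ⟨s, hs, -, hs_norm⟩ := exists_countable_norming_set (𝕜 := 𝕜) (E := E) (F := F)
  have := hs.to_subtype
  refine measurable_of_measurable_dist fun T => ?_
  simp_rw [dist_eq_norm, hs_norm, sub_apply, ← dist_eq_norm]
  exact .iSup fun x => (continuous_id.dist continuous_const).measurable.comp (hf x)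

theorem aestronglyMeasurable_of_aemeasurable_apply [MeasurableSpace Ω] {μ : Measure Ω}
    {f : Ω → E →L[𝕜] F} (hf : ∀ x, AEMeasurable (fun ω => f ω x) μ) :
    AEStronglyMeasurable f μ := by
  borelize (E →L[𝕜] F)
  have := UniformSpace.secondCountable_of_separable (E →L[𝕜] F)
  have hf_null : NullMeasurable f μ :=
    measurable_of_measurable_apply (Ω := NullMeasurableSpace Ω μ) fun x => (hf x).nullMeasurable
  exact hf_null.aemeasurable.aestronglyMeasurable

end ContinuousLinearMap

theorem statement13_general {Ω F : Type*} [MeasurableSpace Ω] (μ : Measure Ω)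
    [NormedAddCommGroup F] [NormedSpace ℝ F]
    [TopologicalSpace.SeparableSpace (StrongDual ℝ F)]
    (M : Ω → StrongDual ℝ F →L[ℝ] StrongDual ℝ F) :
    (∀ (v' : StrongDual ℝ F) (v : F), AEMeasurable (fun ω => M ω v' v) μ) ↔
    (∀ v' : StrongDual ℝ F, AEStronglyMeasurable (fun ω => M ω v') μ) :=
  ⟨fun h v' => ContinuousLinearMap.aestronglyMeasurable_of_aemeasurable_apply (h v'),
    fun h v' v => ((ContinuousLinearMap.apply ℝ ℝ v).continuous.comp_aestronglyMeasurable
      (h v')).aemeasurable⟩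

/-- If `F'` is a separable dual space, then for a bounded function `M : Ω → ℒ(F')` the
following are equivalent: (i) `ω ↦ ⟨M(ω)v', v⟩` is (a.e.-)measurable for all `v' ∈ F'`,
`v ∈ F`; (ii) each orbit `M(·)v'` is a.e. equal to a strongly measurable function.
In other words, `L^∞_{σ*}(Ω; ℒ(F')) = L^∞(Ω; ℒ_s(F'))`, where `ℒ(F')` is regarded as the
dual of `F' ⊗̂_π F`. -/
theorem statement13 {Ω F : Type*} [MeasurableSpace Ω] (μ : Measure Ω)
    [NormedAddCommGroup F] [NormedSpace ℝ F] [CompleteSpace F]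
    [TopologicalSpace.SeparableSpace (StrongDual ℝ F)]
    (M : Ω → StrongDual ℝ F →L[ℝ] StrongDual ℝ F)
    (hM : ∃ C : ℝ, ∀ ω, ‖M ω‖ ≤ C) :
    (∀ (v' : StrongDual ℝ F) (v : F), AEMeasurable (fun ω => M ω v' v) μ) ↔
    (∀ v' : StrongDual ℝ F, AEStronglyMeasurable (fun ω => M ω v') μ) :=
  statement13_general μ M
end
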